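/- arXiv:2603.06938 — 2 statements merged into one kernel-verified Lean document; each statement's English description precedes it below -/
import Mathlib

section
/- Let A be a real N×N matrix and, for each t ∈ {1,…,T} and e ∈ {1,…,E}, let B_t^(e) ∈ ℝ^{N×P}, X_t^(e) ∈ ℝ^P, and let C_t ∈ ℝ^{N×P} be a readout shared by all experts. Suppose the routing weights are time-invariant: π_{t,e} = π_e ≥ 0 for all t. Let the separated model be h_t^(e) = A h_{t-1}^(e) + B_t^(e) X_t^(e) with h_0^(e) = 0 for every e, and output Y_t^sep = Σ_{e=1}^E π_e C_tᵀ h_t^(e). Let the mixed model be h_t = A h_{t-1} + Σ_{e=1}^E π_e B_t^(e) X_t^(e) with h_0 = 0, and output Y_t^mix = C_tᵀ h_t. Then Y_t^sep = Y_t^mix for all t ∈ {1,…,T}. -/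
/-!
Both state recursions are driven by the same linear map `A`, the weights do not depend on time
and the initial states vanish, so by induction on `t` the mixed state is the `π`-weighted sum of
the separated states. The shared readout `C_tᵀ` is linear, hence maps this sum of states to the
`π`-weighted sum of the separated outputs.
-/

open Finset

theorem eq_sum_smul_of_linear_recurrence {R M ι : Type*} [Semiring R] [AddCommMonoid M]
    [Module R M] (f : M →ₗ[R] M) (π : ι → R) (s : Finset ι) {T : ℕ}
    (x : ℕ → ι → M) (u : ℕ → ι → M) (y : ℕ → M)
    (hx0 : ∀ i, x 0 i = 0) (hy0 : y 0 = 0)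
    (hx : ∀ t < T, ∀ i, x (t + 1) i = f (x t i) + u (t + 1) i)
    (hy : ∀ t < T, y (t + 1) = f (y t) + ∑ i ∈ s, π i • u (t + 1) i) :
    ∀ t ≤ T, y t = ∑ i ∈ s, π i • x t i := by
  intro t
  induction t with
  | zero => simp [hy0, hx0]
  | succ t ih =>
    intro ht
    rw [hy t ht, ih (by omega), map_sum]
    simp only [map_smul, hx t ht, smul_add, sum_add_distrib]

theorem separated_eq_mixed_time_invariant_routing_general
    (N P E T : ℕ)
    (A : Matrix (Fin N) (Fin N) ℝ)
    (B : ℕ → Fin E → Matrix (Fin N) (Fin P) ℝ)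
    (X : ℕ → Fin E → Fin P → ℝ)
    (Ct : ℕ → Matrix (Fin N) (Fin P) ℝ)   -- readout shared by all experts
    (π : Fin E → ℝ)   -- time-invariant routing weights
    -- separated model
    (hsep : ℕ → Fin E → Fin N → ℝ)
    (hsep0 : ∀ e, hsep 0 e = 0)
    (hseprec : ∀ t, 1 ≤ t → t ≤ T → ∀ e,
      hsep t e = A.mulVec (hsep (t - 1) e) + (B t e).mulVec (X t e))
    (Ysep : ℕ → Fin P → ℝ)
    (hYsep : ∀ t, 1 ≤ t → t ≤ T →
      Ysep t = ∑ e, π e • (Ct t).transpose.mulVec (hsep t e))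
    -- mixed model
    (hmix : ℕ → Fin N → ℝ)
    (hmix0 : hmix 0 = 0)
    (hmixrec : ∀ t, 1 ≤ t → t ≤ T →
      hmix t = A.mulVec (hmix (t - 1)) + ∑ e, π e • (B t e).mulVec (X t e))
    (Ymix : ℕ → Fin P → ℝ)
    (hYmix : ∀ t, 1 ≤ t → t ≤ T →
      Ymix t = (Ct t).transpose.mulVec (hmix t)) :
    ∀ t, 1 ≤ t → t ≤ T → Ysep t = Ymix t := by
  have hstate : ∀ t ≤ T, hmix t = ∑ e, π e • hsep t e :=
    eq_sum_smul_of_linear_recurrence A.mulVecLin π univ hsep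
      (fun t e => (B t e).mulVec (X t e)) hmix hsep0 hmix0
      (fun t ht => by simpa using hseprec (t + 1) (by omega) ht)
      (fun t ht => by simpa using hmixrec (t + 1) (by omega) ht)
  intro t h1 h2
  rw [hYsep t h1 h2, hYmix t h1 h2, hstate t h2, Matrix.mulVec_sum]
  simp only [Matrix.mulVec_smul]

/-- **Equality regime: separated vs parameter-mixed MoE-SSM.**
With a shared transition `A`, a shared readout `C_t`, time-invariant nonnegative
routing weights `π_e`, and zero initial states, the output of the MoE of separated
SSMs equals the output of the MoE-parameterized SSM at every time `t ∈ {1,…,T}`. -/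
theorem separated_eq_mixed_time_invariant_routing
    (N P E T : ℕ)
    (A : Matrix (Fin N) (Fin N) ℝ)
    (B : ℕ → Fin E → Matrix (Fin N) (Fin P) ℝ)
    (X : ℕ → Fin E → Fin P → ℝ)
    (Ct : ℕ → Matrix (Fin N) (Fin P) ℝ)   -- readout shared by all experts
    (π : Fin E → ℝ) (hπ : ∀ e, 0 ≤ π e)   -- time-invariant routing weights
    -- separated model
    (hsep : ℕ → Fin E → Fin N → ℝ)
    (hsep0 : ∀ e, hsep 0 e = 0)
    (hseprec : ∀ t, 1 ≤ t → t ≤ T → ∀ e,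
      hsep t e = A.mulVec (hsep (t - 1) e) + (B t e).mulVec (X t e))
    (Ysep : ℕ → Fin P → ℝ)
    (hYsep : ∀ t, 1 ≤ t → t ≤ T →
      Ysep t = ∑ e, π e • (Ct t).transpose.mulVec (hsep t e))
    -- mixed model
    (hmix : ℕ → Fin N → ℝ)
    (hmix0 : hmix 0 = 0)
    (hmixrec : ∀ t, 1 ≤ t → t ≤ T →
      hmix t = A.mulVec (hmix (t - 1)) + ∑ e, π e • (B t e).mulVec (X t e))
    (Ymix : ℕ → Fin P → ℝ)
    (hYmix : ∀ t, 1 ≤ t → t ≤ T →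
      Ymix t = (Ct t).transpose.mulVec (hmix t)) :
    ∀ t, 1 ≤ t → t ≤ T → Ysep t = Ymix t :=
  separated_eq_mixed_time_invariant_routing_general N P E T A B X Ct π hsep hsep0 hseprec Ysep hYsep
    hmix hmix0 hmixrec Ymix hYmix
end

section
/- For every choice of affine functions b, c, u : ℝ → ℝ (functions of the form x ↦ αx + β with real coefficients), the function x ↦ c(x)·b(x)·u(x) does not coincide with the logistic sigmoid σ(x) = 1/(1 + e^{−x}) on all of ℝ. Consequently, in the one-step scalar specialization (T = 1, N = P = 1, A = 0, h_0 = 0), no single-expert layer whose streams B_1, C_1, X_1 are affine functions of the input can represent the function σ, while the two-expert MoE-parameterized layer with softmax routing can; hence the class of functions representable by the MoE-parameterized layer strictly contains the class representable by single-expert linear-projection layers, with both executing one state update. -/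
open scoped BigOperators

/-- An affine function `x ↦ α x + β` on `ℝ`. -/
def IsAffine (f : ℝ → ℝ) : Prop := ∃ α β : ℝ, ∀ x, f x = α * x + β

/-- Functions computed by a one-step scalar single-expert layer
(`T = 1`, `N = P = 1`, `A = 0`, `h_0 = 0`) whose streams `B_1, C_1, X_1` are
affine functions of the input: `Y_1(x) = c(x)·b(x)·u(x)`. -/
def SingleExpertClass : Set (ℝ → ℝ) :=
  {f | ∃ b c u : ℝ → ℝ, IsAffine b ∧ IsAffine c ∧ IsAffine u ∧
    ∀ x, f x = c x * b x * u x}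

/-- Functions computed by a one-step scalar MoE-parameterized layer
(`T = 1`, `N = P = 1`, `A = 0`, `h_0 = 0`) with `E` experts whose streams and
router logits are affine functions of the input and softmax routing:
`Y_1(x) = (Σ_e π_e(x) c_e(x)) · (Σ_e π_e(x) b_e(x) u_e(x))`, where
`π_e(x) = exp(g_e(x)) / Σ_j exp(g_j(x))`. -/
def MoEParamClass : Set (ℝ → ℝ) :=
  {f | ∃ (E : ℕ) (g b c u : Fin E → ℝ → ℝ),
    (∀ e, IsAffine (g e) ∧ IsAffine (b e) ∧ IsAffine (c e) ∧ IsAffine (u e)) ∧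
    ∀ x, f x =
      (∑ e, (Real.exp (g e x) / ∑ j, Real.exp (g j x)) * c e x) *
      (∑ e, (Real.exp (g e x) / ∑ j, Real.exp (g j x)) * (b e x * u e x))}

/-! With affine streams the single-expert output `c x * b x * u x` is a polynomial in `x`. A real
polynomial bounded on `ℝ` is constant, whereas `σ` is bounded and injective, so `σ` is not
single-expert. Softmax routing over the logits `(0, x)` puts weight exactly `σ x` on the second
expert, so two experts with readouts `0` and `1` and unit streams produce `σ`. -/

open Polynomial Real

lemma isAffine_const (k : ℝ) : IsAffine fun _ => k := ⟨0, k, fun x => by ring⟩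

lemma isAffine_id : IsAffine fun x => x := ⟨1, 0, fun x => by ring⟩

lemma IsAffine.exists_eval_eq {f : ℝ → ℝ} (hf : IsAffine f) :
    ∃ p : ℝ[X], ∀ x, f x = p.eval x := by
  obtain ⟨α, β, hf⟩ := hf
  exact ⟨C α * X + C β, fun x => by simp [hf]⟩

lemma Polynomial.degree_nonpos_of_abs_eval_le {p : ℝ[X]} {M : ℝ} (h : ∀ x, |p.eval x| ≤ M) :
    p.degree ≤ 0 := by
  by_contra! hdeg
  obtain ⟨x, hx⟩ := ((p.abs_tendsto_atTop hdeg).eventually_gt_atTop M).exists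
  exact (h x).not_gt hx

lemma Real.not_forall_eval_eq_sigmoid (p : ℝ[X]) : ¬ ∀ x, p.eval x = sigmoid x := by
  intro hp
  have hbdd : ∀ x, |p.eval x| ≤ 1 := fun x => by
    rw [hp, abs_of_pos (sigmoid_pos x)]
    exact sigmoid_le_one x
  have hconst := degree_le_zero_iff.mp (degree_nonpos_of_abs_eval_le hbdd)
  have h01 : sigmoid 0 = sigmoid 1 := by rw [← hp, ← hp, hconst, eval_C, eval_C]
  exact zero_ne_one (sigmoid_injective h01)

lemma exists_eval_eq_of_mem_singleExpertClass {f : ℝ → ℝ} (hf : f ∈ SingleExpertClass) :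
    ∃ p : ℝ[X], ∀ x, f x = p.eval x := by
  obtain ⟨b, c, u, hb, hc, hu, hf⟩ := hf
  obtain ⟨pb, hpb⟩ := hb.exists_eval_eq
  obtain ⟨pc, hpc⟩ := hc.exists_eval_eq
  obtain ⟨pu, hpu⟩ := hu.exists_eval_eq
  exact ⟨pc * pb * pu, fun x => by simp [hf, hpb, hpc, hpu]⟩

lemma sigmoid_notMem_singleExpertClass : sigmoid ∉ SingleExpertClass := fun h => by
  obtain ⟨p, hp⟩ := exists_eval_eq_of_mem_singleExpertClass h
  exact not_forall_eval_eq_sigmoid p fun x => (hp x).symm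

lemma singleExpertClass_subset_moeParamClass : SingleExpertClass ⊆ MoEParamClass := by
  rintro f ⟨b, c, u, hb, hc, hu, hf⟩
  refine ⟨1, ![fun _ => 0], ![b], ![c], ![u],
    Fin.forall_fin_one.mpr ⟨isAffine_const 0, hb, hc, hu⟩, fun x => ?_⟩
  simp [hf, mul_assoc]

lemma sigmoid_mem_moeParamClass : sigmoid ∈ MoEParamClass := by
  refine ⟨2, ![fun _ => 0, id], ![fun _ => 1, fun _ => 1], ![fun _ => 0, fun _ => 1],
    ![fun _ => 1, fun _ => 1], ?_, fun x => ?_⟩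
  · exact Fin.forall_fin_two.mpr
      ⟨⟨isAffine_const 0, isAffine_const 1, isAffine_const 0, isAffine_const 1⟩,
        ⟨isAffine_id, isAffine_const 1, isAffine_const 1, isAffine_const 1⟩⟩
  · simp only [Fin.sum_univ_two, Matrix.cons_val_zero, Matrix.cons_val_one, id, exp_zero,
      sigmoid_def, exp_neg]
    field_simp
    ring

/-- **Strict expressivity gain of the MoE-parameterized layer with one recurrence.**
No single-expert layer with affine streams represents the logistic sigmoid
`σ(x) = 1/(1 + e^{−x})`, while the two-expert MoE-parameterized layer with softmax
routing does; hence the function class of the MoE-parameterized layer strictly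
contains that of single-expert linear-projection layers, with both executing one
state update. -/
theorem moe_strict_expressivity_gain :
    (∀ b c u : ℝ → ℝ, IsAffine b → IsAffine c → IsAffine u →
      ¬ ∀ x : ℝ, c x * b x * u x = 1 / (1 + Real.exp (-x))) ∧
    (fun x : ℝ => 1 / (1 + Real.exp (-x))) ∈ MoEParamClass ∧
    (fun x : ℝ => 1 / (1 + Real.exp (-x))) ∉ SingleExpertClass ∧
    SingleExpertClass ⊂ MoEParamClass := by
  simp only [one_div, ← sigmoid_def]
  refine ⟨fun b c u hb hc hu h => ?_, sigmoid_mem_moeParamClass,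
    sigmoid_notMem_singleExpertClass, ?_⟩
  · exact sigmoid_notMem_singleExpertClass ⟨b, c, u, hb, hc, hu, fun x => (h x).symm⟩
  · refine ssubset_of_subset_not_subset singleExpertClass_subset_moeParamClass fun h => ?_
    exact sigmoid_notMem_singleExpertClass (h sigmoid_mem_moeParamClass)
end
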